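/- GME of a star network with one isotropic edge: let n ≥ 3, d ≥ 2, and p ∈ [0,1] with p > 1/(d+1). Consider the n-partite state ρ_p ⊗ (φ_d^+)^{⊗(n−2)}, where Alice holds one subsystem of every tensor factor, Bob₁ holds the other subsystem of the d-dimensional isotropic state ρ_p, and each Bob_i for 2 ≤ i ≤ n−1 holds the other subsystem of one copy of the maximally entangled state φ_d^+. This state is genuinely multipartite entangled. -/

import Mathlib

open Matrix Finset
open scoped ComplexOrder

attribute [local instance] Classical.propDecidable

noncomputable section

/-- The rank-one matrix `|v⟩⟨v|` associated to a vector `v`. -/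
def vecProj {D : Type*} [Fintype D] (v : D → ℂ) : Matrix D D ℂ :=
  Matrix.of fun i j => v i * star (v j)

/-- `v` is a unit vector. -/
def UnitVec {D : Type*} [Fintype D] (v : D → ℂ) : Prop :=
  ∑ i, star (v i) * v i = 1

/-- A quantum state: positive semidefinite matrix of trace one. -/
def IsState {D : Type*} [Fintype D] [DecidableEq D] (ρ : Matrix D D ℂ) : Prop :=
  ρ.PosSemidef ∧ ρ.trace = 1

/-- A vector on a multipartite system is fully product if it is a tensor product of
single-party vectors. -/
def IsProdVec {ι : Type*} [Fintype ι] {Idx : ι → Type*} (v : (∀ i, Idx i) → ℂ) : Prop :=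
  ∃ ψ : ∀ i, Idx i → ℂ, ∀ f, v f = ∏ i, ψ i (f i)

/-- A vector on a multipartite system is biseparable if it is a product across some
bipartition of the parties into a nonempty proper subset `M` and its complement. -/
def IsBisepVec {ι : Type*} [Fintype ι] {Idx : ι → Type*} (v : (∀ i, Idx i) → ℂ) : Prop :=
  ∃ M : Finset ι, M.Nonempty ∧ M ≠ Finset.univ ∧
    ∃ (a : ((j : {j : ι // j ∈ M}) → Idx j.1) → ℂ)
      (b : ((j : {j : ι // j ∉ M}) → Idx j.1) → ℂ),
      ∀ f, v f = a (fun j => f j.1) * b (fun j => f j.1)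

/-- Fully separable states: finite convex combinations of fully product pure states. -/
def FullySepState {ι : Type*} [Fintype ι] [DecidableEq ι] (Idx : ι → Type*)
    [∀ i, Fintype (Idx i)] (ρ : Matrix (∀ i, Idx i) (∀ i, Idx i) ℂ) : Prop :=
  ∃ (m : ℕ) (w : Fin m → ℝ) (u : Fin m → (∀ i, Idx i) → ℂ),
    (∀ k, 0 ≤ w k) ∧ (∑ k, w k = 1) ∧
    (∀ k, UnitVec (u k) ∧ IsProdVec (u k)) ∧
    ρ = ∑ k, (w k : ℂ) • vecProj (u k)

/-- Biseparable states: finite convex combinations of biseparable pure states. -/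
def BisepState {ι : Type*} [Fintype ι] [DecidableEq ι] (Idx : ι → Type*)
    [∀ i, Fintype (Idx i)] (ρ : Matrix (∀ i, Idx i) (∀ i, Idx i) ℂ) : Prop :=
  ∃ (m : ℕ) (w : Fin m → ℝ) (u : Fin m → (∀ i, Idx i) → ℂ),
    (∀ k, 0 ≤ w k) ∧ (∑ k, w k = 1) ∧
    (∀ k, UnitVec (u k) ∧ IsBisepVec (u k)) ∧
    ρ = ∑ k, (w k : ℂ) • vecProj (u k)

/-- The maximally entangled vector `(1/√d) ∑ᵢ |ii⟩` on `ℂ^d ⊗ ℂ^d`. -/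
def maxEntVec (d : ℕ) : Fin d × Fin d → ℂ :=
  fun q => if q.1 = q.2 then (((Real.sqrt d)⁻¹ : ℝ) : ℂ) else 0

/-- The `d`-dimensional isotropic state with visibility `p`:
`ρ_p = p·φ_d⁺ + (1-p)·𝟙/d²`. -/
def isoState (d : ℕ) (p : ℝ) : Matrix (Fin d × Fin d) (Fin d × Fin d) ℂ :=
  (p : ℂ) • vecProj (maxEntVec d) +
    ((((1 - p) / (d ^ 2 : ℝ)) : ℝ) : ℂ) •
      (1 : Matrix (Fin d × Fin d) (Fin d × Fin d) ℂ)

/-- The parties of the star network: `none` is Alice, `some i` is Bob `i`. Alice holds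
`n−1` subsystems (one for each edge), each Bob holds one. -/
def StarIdx (n d : ℕ) : Option (Fin (n - 1)) → Type
  | none => Fin (n - 1) → Fin d
  | some _ => Fin d

instance (n d : ℕ) (o : Option (Fin (n - 1))) : Fintype (StarIdx n d o) :=
  match o with
  | none => inferInstanceAs (Fintype (Fin (n - 1) → Fin d))
  | some _ => inferInstanceAs (Fintype (Fin d))

instance (n d : ℕ) (o : Option (Fin (n - 1))) : DecidableEq (StarIdx n d o) :=
  match o with
  | none => inferInstanceAs (DecidableEq (Fin (n - 1) → Fin d))
  | some _ => inferInstanceAs (DecidableEq (Fin d))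

/-- The star network state: edge `i₀` carries the isotropic state `ρ_p`, and every other
edge `i` carries the maximally entangled state `φ_d⁺`; edge `i` connects Alice's `i`-th
subsystem to Bob `i`. -/
def starNet (n d : ℕ) (p : ℝ) (i₀ : Fin (n - 1)) :
    Matrix (∀ o, StarIdx n d o) (∀ o, StarIdx n d o) ℂ :=
  Matrix.of fun f g =>
    ∏ i : Fin (n - 1),
      (if i = i₀ then isoState d p else vecProj (maxEntVec d))
        (f none i, f (some i)) (g none i, g (some i))


/-
The witness is the product `Φ` of maximally entangled vectors on all edges. The network state is,
after regrouping the subsystems edge by edge, a tensor product of edge states, so its fidelity with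
`Φ` is the product of the edge fidelities, `p + (1 - p) / d²`. For a biseparable unit vector
`a ⊗ b` choose the cut with Alice on the `b` side and some Bob `i₁` on the `a` side. Only
configurations in which every Bob agrees with Alice meet `Φ`; on those, the argument of `a`
fixes Alice's record at `i₁`, so each value of `a` is met by at most `d ^ (n - 2)` records,
and Cauchy–Schwarz gives `|⟨Φ|a ⊗ b⟩|² ≤ d^{-(n-1)} d^{n-2} = 1/d`. Hence every biseparable
state has fidelity at most `1/d`, whereas `p + (1 - p) / d² > 1/d` exactly when `p > 1/(d+1)`.
-/

theorem Complex.normSq_sum_mul_le {ι : Type*} (s : Finset ι) (a b : ι → ℂ) :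
    Complex.normSq (∑ i ∈ s, a i * b i)
      ≤ (∑ i ∈ s, Complex.normSq (a i)) * ∑ i ∈ s, Complex.normSq (b i) := by
  simp only [← Complex.sq_norm]
  calc ‖∑ i ∈ s, a i * b i‖ ^ 2 ≤ (∑ i ∈ s, ‖a i * b i‖) ^ 2 := by
        gcongr; exact norm_sum_le _ _
    _ ≤ _ := Finset.sum_sq_le_sum_mul_sum_of_sq_le_mul s (fun _ _ => sq_nonneg _)
        (fun _ _ => sq_nonneg _) fun i _ => by rw [norm_mul, mul_pow]

theorem unitVec_iff_sum_normSq {D : Type*} [Fintype D] (v : D → ℂ) :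
    UnitVec v ↔ ∑ i, Complex.normSq (v i) = 1 := by
  simp only [UnitVec, RCLike.star_def, ← Complex.normSq_eq_conj_mul_self]
  exact_mod_cast Iff.rfl

theorem star_dotProduct_vecProj_mulVec {D : Type*} [Fintype D] (w u : D → ℂ) :
    star w ⬝ᵥ (vecProj u *ᵥ w) = Complex.normSq (star w ⬝ᵥ u) := by
  have : vecProj u = vecMulVec u (star u) := rfl
  rw [this, vecMulVec_mulVec, dotProduct_smul, op_smul_eq_mul, star_dotProduct (v := u),
    Complex.normSq_eq_conj_mul_self, RCLike.star_def, mul_comm]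

theorem UnitVec.star_dotProduct_vecProj_mulVec_self {D : Type*} [Fintype D] {v : D → ℂ}
    (hv : UnitVec v) : star v ⬝ᵥ (vecProj v *ᵥ v) = 1 := by
  rw [star_dotProduct_vecProj_mulVec]
  have : star v ⬝ᵥ v = 1 := hv
  simp [this]

theorem star_dotProduct_piMatrix_mulVec {ι κ : Type*} [Fintype ι] [DecidableEq ι] [Fintype κ]
    (v : ι → κ → ℂ) (A : ι → Matrix κ κ ℂ) :
    star (fun e : ι → κ => ∏ i, v i (e i)) ⬝ᵥ
        (Matrix.of (fun e e' : ι → κ => ∏ i, A i (e i) (e' i)) *ᵥ fun e => ∏ i, v i (e i))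
      = ∏ i, star (v i) ⬝ᵥ (A i *ᵥ v i) := by
  simp only [dotProduct, mulVec, Finset.mul_sum, Fintype.prod_sum, Pi.star_apply, star_prod,
    of_apply, ← Finset.prod_mul_distrib]

theorem BisepState.re_star_dotProduct_mulVec_le {ι : Type*} [Fintype ι] [DecidableEq ι]
    {Idx : ι → Type*} [∀ i, Fintype (Idx i)] {ρ : Matrix (∀ i, Idx i) (∀ i, Idx i) ℂ}
    (hρ : BisepState Idx ρ) (w : (∀ i, Idx i) → ℂ) {c : ℝ}
    (hc : ∀ u, UnitVec u → IsBisepVec u → Complex.normSq (star w ⬝ᵥ u) ≤ c) :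
    (star w ⬝ᵥ (ρ *ᵥ w)).re ≤ c := by
  obtain ⟨m, wt, u, hwt, hsum, hu, rfl⟩ := hρ
  simp only [sum_mulVec, dotProduct_sum, smul_mulVec, dotProduct_smul,
    star_dotProduct_vecProj_mulVec, Complex.re_sum, smul_eq_mul, ← Complex.ofReal_mul,
    Complex.ofReal_re]
  calc ∑ k, wt k * Complex.normSq (star w ⬝ᵥ u k) ≤ ∑ k, wt k * c := by
        gcongr with k
        · exact hwt k
        · exact hc _ (hu k).1 (hu k).2
    _ = c := by rw [← Finset.sum_mul, hsum, one_mul]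

theorem sum_normSq_mul_restrict {ι : Type*} [Fintype ι] [DecidableEq ι] {Idx : ι → Type*}
    [∀ i, Fintype (Idx i)] (M : Finset ι)
    (a : ((j : {j : ι // j ∈ M}) → Idx j.1) → ℂ) (b : ((j : {j : ι // j ∉ M}) → Idx j.1) → ℂ) :
    ∑ f : ∀ i, Idx i, Complex.normSq (a (fun j => f j.1) * b (fun j => f j.1))
      = (∑ x, Complex.normSq (a x)) * ∑ y, Complex.normSq (b y) := by
  rw [Finset.sum_mul_sum, ← Fintype.sum_prod_type',
    ← (Equiv.piEquivPiSubtypeProd (· ∈ M) Idx).sum_comp]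
  simp [Complex.normSq_mul]

theorem IsBisepVec.exists_split_notMem {ι : Type*} [Fintype ι] {Idx : ι → Type*}
    {v : (∀ i, Idx i) → ℂ} (hv : IsBisepVec v) (i₀ : ι) :
    ∃ M : Finset ι, M.Nonempty ∧ i₀ ∉ M ∧
      ∃ (a : ((j : {j : ι // j ∈ M}) → Idx j.1) → ℂ)
        (b : ((j : {j : ι // j ∉ M}) → Idx j.1) → ℂ),
        ∀ f, v f = a (fun j => f j.1) * b (fun j => f j.1) := by
  obtain ⟨M, hne, hM, a, b, hab⟩ := hv
  by_cases h : i₀ ∈ M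
  · refine ⟨Mᶜ, Finset.nonempty_iff_ne_empty.mpr ((Finset.compl_eq_empty_iff M).not.mpr hM),
      by simp [h],
      fun y => b (fun j => y ⟨j.1, Finset.mem_compl.mpr j.2⟩),
      fun z => a (fun j => z ⟨j.1, by simp [j.2]⟩),
      fun f => (hab f).trans (mul_comm _ _)⟩
  · exact ⟨M, hne, h, a, b, hab⟩

theorem sum_comp_le_mul_sum {α β : Type*} [Fintype α] [Fintype β] [DecidableEq β] (π : α → β)
    {F : β → ℝ} (hF : ∀ b, 0 ≤ F b) {N : ℕ} (hN : ∀ b, #{a | π a = b} ≤ N) :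
    ∑ a, F (π a) ≤ N * ∑ b, F b := by
  rw [← Finset.sum_fiberwise Finset.univ π, Finset.mul_sum]
  gcongr with b
  calc ∑ a with π a = b, F (π a) = #{a | π a = b} * F b := by
        rw [Finset.sum_congr rfl fun a ha => by rw [(Finset.mem_filter.mp ha).2],
          Finset.sum_const, nsmul_eq_mul]
    _ ≤ N * F b := by gcongr; exacts [hF b, mod_cast hN b]

theorem star_maxEntVec (d : ℕ) : star (maxEntVec d) = maxEntVec d := by
  ext q
  simp only [Pi.star_apply, maxEntVec]
  split_ifs <;> simp

theorem maxEntVec_unitVec {d : ℕ} (hd : d ≠ 0) : UnitVec (maxEntVec d) := by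
  rw [unitVec_iff_sum_normSq, Fintype.sum_prod_type]
  simp only [maxEntVec, apply_ite Complex.normSq, Complex.normSq_ofReal, map_zero,
    Finset.sum_ite_eq, Finset.mem_univ, if_true, Finset.sum_const, Finset.card_univ,
    Fintype.card_fin, nsmul_eq_mul, ← mul_inv, Real.mul_self_sqrt (Nat.cast_nonneg d)]
  exact mul_inv_cancel₀ (Nat.cast_ne_zero.mpr hd)

theorem star_maxEntVec_dotProduct_isoState_mulVec {d : ℕ} (hd : d ≠ 0) (p : ℝ) :
    star (maxEntVec d) ⬝ᵥ (isoState d p *ᵥ maxEntVec d) = ((p + (1 - p) / d ^ 2 : ℝ) : ℂ) := by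
  have hunit := maxEntVec_unitVec hd
  have hnorm : star (maxEntVec d) ⬝ᵥ maxEntVec d = 1 := hunit
  rw [isoState, add_mulVec, smul_mulVec, smul_mulVec, one_mulVec, dotProduct_add, dotProduct_smul,
    dotProduct_smul, hunit.star_dotProduct_vecProj_mulVec_self, hnorm]
  push_cast
  simp

namespace StarNet

def edgeEquiv (n d : ℕ) : (∀ o, StarIdx n d o) ≃ (Fin (n - 1) → Fin d × Fin d) where
  toFun f i := (f none i, f (some i))
  invFun e
    | none => fun i => (e i).1
    | some i => (e i).2
  left_inv f := by
    funext o
    cases o <;> rfl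
  right_inv _ := rfl

def maxEntProd (n d : ℕ) : (∀ o, StarIdx n d o) → ℂ :=
  fun f => ∏ i, maxEntVec d (f none i, f (some i))

variable {n d : ℕ}

theorem star_maxEntProd_dotProduct_starNet_mulVec (hd : d ≠ 0) (p : ℝ) (i₀ : Fin (n - 1)) :
    star (maxEntProd n d) ⬝ᵥ (starNet n d p i₀ *ᵥ maxEntProd n d)
      = ((p + (1 - p) / d ^ 2 : ℝ) : ℂ) := by
  let A : Fin (n - 1) → Matrix (Fin d × Fin d) (Fin d × Fin d) ℂ :=
    fun i => if i = i₀ then isoState d p else vecProj (maxEntVec d)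
  have hstar : star (maxEntProd n d)
      = star (fun e : Fin (n - 1) → Fin d × Fin d => ∏ i, maxEntVec d (e i)) ∘ edgeEquiv n d :=
    rfl
  have hnet : starNet n d p i₀
      = (Matrix.of fun e e' : Fin (n - 1) → Fin d × Fin d => ∏ i, A i (e i) (e' i)).submatrix
          (edgeEquiv n d) (edgeEquiv n d) := rfl
  have hvec : maxEntProd n d
      = (fun e : Fin (n - 1) → Fin d × Fin d => ∏ i, maxEntVec d (e i)) ∘ edgeEquiv n d := rfl
  rw [hstar, hnet, hvec, submatrix_mulVec_equiv, Function.comp_assoc, Equiv.self_comp_symm,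
    Function.comp_id, comp_equiv_dotProduct_comp_equiv,
    star_dotProduct_piMatrix_mulVec (fun _ => maxEntVec d) A,
    Fintype.prod_eq_single i₀ fun i hi => ?_]
  · simp only [A, if_pos rfl]
    exact star_maxEntVec_dotProduct_isoState_mulVec hd p
  · simp only [A, if_neg hi]
    exact (maxEntVec_unitVec hd).star_dotProduct_vecProj_mulVec_self

theorem star_maxEntProd : star (maxEntProd n d) = maxEntProd n d := by
  funext f
  simp only [Pi.star_apply, maxEntProd, star_prod]
  exact Finset.prod_congr rfl fun i _ => congrFun (star_maxEntVec d) _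

def diag (g : Fin (n - 1) → Fin d) : ∀ o, StarIdx n d o :=
  (edgeEquiv n d).symm fun i => (g i, g i)

theorem diag_injective : Function.Injective (diag (n := n) (d := d)) :=
  fun _ _ h => congrFun h none

theorem sum_maxEntProd_mul (h : (∀ o, StarIdx n d o) → ℂ) :
    ∑ f, maxEntProd n d f * h f
      = (((Real.sqrt d)⁻¹ : ℝ) : ℂ) ^ (n - 1) * ∑ g, h (diag g) := by
  rw [← Finset.sum_subset (Finset.subset_univ (Finset.univ.image diag)),
    Finset.sum_image fun g _ g' _ hg => diag_injective hg, Finset.mul_sum]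
  · refine Finset.sum_congr rfl fun g _ => ?_
    simp [maxEntProd, diag, edgeEquiv, maxEntVec]
  · intro f _ hf
    obtain ⟨i, hi⟩ : ∃ i, f none i ≠ f (some i) := by
      by_contra! hdiag
      refine hf (Finset.mem_image.mpr ⟨f none, Finset.mem_univ _, ?_⟩)
      refine (edgeEquiv n d).injective (funext fun i => ?_)
      simp [diag, edgeEquiv, hdiag i]
    rw [maxEntProd, Finset.prod_eq_zero (Finset.mem_univ i) (by simp [maxEntVec, hi]), zero_mul]

theorem card_filter_restrict_diag_le {M : Finset (Option (Fin (n - 1)))} {i₁ : Fin (n - 1)}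
    (hi₁ : some i₁ ∈ M) (x : (j : {j // j ∈ M}) → StarIdx n d j.1) :
    #{g | (fun j : {j // j ∈ M} => diag g j.1) = x} ≤ d ^ (n - 2) := by
  obtain ⟨c, hc⟩ : ∃ c : Fin d, x ⟨_, hi₁⟩ = c := ⟨_, rfl⟩
  calc #{g | (fun j : {j // j ∈ M} => diag g j.1) = x}
      ≤ #{g ∈ Fintype.piFinset fun _ => Finset.univ | g i₁ = c} :=
        Finset.card_le_card fun g hg => by
          simp only [Finset.mem_filter, Finset.mem_univ, true_and] at hg
          exact Finset.mem_filter.mpr ⟨Fintype.mem_piFinset.mpr fun _ => Finset.mem_univ _,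
            (congrFun hg ⟨_, hi₁⟩).trans hc⟩
    _ = d ^ (n - 2) := by
        rw [Fintype.card_filter_piFinset_const_eq_of_mem _ _ (Finset.mem_univ _)]
        simp [Nat.sub_sub]

theorem card_filter_restrict_diag_le_one {M : Finset (Option (Fin (n - 1)))} (hnone : none ∉ M)
    (y : (j : {j // j ∉ M}) → StarIdx n d j.1) :
    #{g | (fun j : {j // j ∉ M} => diag g j.1) = y} ≤ 1 :=
  Finset.card_le_one.mpr fun g hg g' hg' => by
    simp only [Finset.mem_filter, Finset.mem_univ, true_and] at hg hg'
    exact congrFun (hg.trans hg'.symm) ⟨none, hnone⟩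

theorem normSq_star_maxEntProd_dotProduct_le (hd : d ≠ 0) {u : (∀ o, StarIdx n d o) → ℂ}
    (hu : UnitVec u) (hb : IsBisepVec u) :
    Complex.normSq (star (maxEntProd n d) ⬝ᵥ u) ≤ 1 / d := by
  obtain ⟨M, ⟨j₁, hj₁⟩, hnone, a, b, hab⟩ := hb.exists_split_notMem none
  obtain ⟨i₁, rfl⟩ : ∃ i₁, j₁ = some i₁ :=
    Option.ne_none_iff_exists'.mp fun h => hnone (h ▸ hj₁)
  set πa : (Fin (n - 1) → Fin d) → (j : {j // j ∈ M}) → StarIdx n d j.1 :=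
    fun g j => diag g j.1
  set πb : (Fin (n - 1) → Fin d) → (j : {j // j ∉ M}) → StarIdx n d j.1 :=
    fun g j => diag g j.1
  have hoverlap : star (maxEntProd n d) ⬝ᵥ u
      = (((Real.sqrt d)⁻¹ : ℝ) : ℂ) ^ (n - 1) * ∑ g, a (πa g) * b (πb g) := by
    rw [star_maxEntProd, dotProduct, sum_maxEntProd_mul]
    simp only [hab, πa, πb]
  have hnorm : (∑ x, Complex.normSq (a x)) * ∑ y, Complex.normSq (b y) = 1 := by
    rw [← sum_normSq_mul_restrict, ← (unitVec_iff_sum_normSq u).mp hu]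
    simp only [hab]
  have hn : n - 1 = n - 2 + 1 := by have := i₁.pos; omega
  have hdpos : (0 : ℝ) < d := by positivity
  calc Complex.normSq (star (maxEntProd n d) ⬝ᵥ u)
      = (d : ℝ)⁻¹ ^ (n - 1) * Complex.normSq (∑ g, a (πa g) * b (πb g)) := by
        rw [hoverlap, Complex.normSq_mul, map_pow, Complex.normSq_ofReal, ← mul_inv,
          Real.mul_self_sqrt hdpos.le]
    _ ≤ (d : ℝ)⁻¹ ^ (n - 1) *
          ((∑ g, Complex.normSq (a (πa g))) * ∑ g, Complex.normSq (b (πb g))) := by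
        gcongr
        exact Complex.normSq_sum_mul_le _ _ _
    _ ≤ (d : ℝ)⁻¹ ^ (n - 1) * (((d ^ (n - 2) : ℕ) * ∑ x, Complex.normSq (a x)) *
          ((1 : ℕ) * ∑ y, Complex.normSq (b y))) := by
        refine mul_le_mul_of_nonneg_left (mul_le_mul ?_ ?_ ?_ ?_) (by positivity)
        · exact sum_comp_le_mul_sum πa (fun _ => Complex.normSq_nonneg _)
            (card_filter_restrict_diag_le hj₁)
        · exact sum_comp_le_mul_sum πb (fun _ => Complex.normSq_nonneg _)
            (card_filter_restrict_diag_le_one hnone)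
        · exact Finset.sum_nonneg fun _ _ => Complex.normSq_nonneg _
        · exact mul_nonneg (Nat.cast_nonneg _)
            (Finset.sum_nonneg fun _ _ => Complex.normSq_nonneg _)
    _ = 1 / d := by
        rw [mul_mul_mul_comm, hnorm, hn]
        push_cast
        rw [pow_succ, inv_pow]
        field_simp

end StarNet

theorem one_div_lt_isotropic_fidelity {d p : ℝ} (hd : 1 < d) (hp : 1 / (d + 1) < p) :
    1 / d < p + (1 - p) / d ^ 2 := by
  have hd0 : 0 < d := by linarith
  have hgap : 0 < p * (d + 1) - 1 := by
    rw [div_lt_iff₀ (by linarith)] at hp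
    linarith
  have key : p + (1 - p) / d ^ 2 - 1 / d = (d - 1) * (p * (d + 1) - 1) / d ^ 2 := by
    field_simp
    ring
  have : 0 < (d - 1) * (p * (d + 1) - 1) / d ^ 2 := by
    apply div_pos (mul_pos (by linarith) hgap)
    positivity
  linarith

/-- **GME of a star network with one isotropic edge.** If `p > 1/(d+1)`, the star
network in which Alice shares an entangled isotropic state with Bob₁ and maximally
entangled states with all the other Bobs is genuinely multipartite entangled. -/
theorem star_network_one_isotropic_edge_GME (n d : ℕ) (hn : 3 ≤ n) (hd : 2 ≤ d)
    (p : ℝ) (hp : 1 / (d + 1 : ℝ) < p) :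
    ¬ BisepState (StarIdx n d) (starNet n d p ⟨0, by omega⟩) := by
  intro hbisep
  have hd0 : d ≠ 0 := by omega
  have hfid := hbisep.re_star_dotProduct_mulVec_le (StarNet.maxEntProd n d) fun _ =>
    StarNet.normSq_star_maxEntProd_dotProduct_le hd0
  rw [StarNet.star_maxEntProd_dotProduct_starNet_mulVec hd0, Complex.ofReal_re] at hfid
  exact (one_div_lt_isotropic_fidelity (by exact_mod_cast hd) hp).not_ge hfid
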